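/- Under the hypotheses of the previous statement (bounded price ratios in [a,b], Carli dispersion ε > 0 on every cycle, T fixed, w_i i.i.d. uniform on the simplex), the Selten Area A_K := P(the data (ρ, w) satisfy GARP) satisfies A_K ≥ 1 − C_T exp(−c₁ K) with c₁ = ε²/(4(b−a)²); in particular A_K → 1 as K → ∞. -/

import Mathlib

open MeasureTheory ProbabilityTheory Finset
open scoped ENNReal

/-- The uniform distribution on the simplex `Δ_{K-1}` (i.e. `Dirichlet(1,…,1)`),
realised as the law of `Y / (∑ Y)` with `Y k` i.i.d. `Exponential(1)`. -/
noncomputable def simplexUniform (K : ℕ) : Measure (Fin K → ℝ) :=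
  (Measure.pi fun _ : Fin K => ProbabilityTheory.expMeasure 1).map
    (fun Y k => Y k / ∑ j, Y j)

/-- The normalised data `(ρ, w)` satisfy GARP iff the revealed-preference graph
(edge `i → j` iff `⟨ρ_{ij}, w_j⟩ ≤ 1`, strict edge for strict inequality)
contains no directed cycle with at least one strict edge. -/
def SatisfiesGARP {T K : ℕ} (ρ : Fin T → Fin T → Fin K → ℝ)
    (w : Fin T → Fin K → ℝ) : Prop :=
  ¬ ∃ (L : ℕ) (f : Fin (L + 2) → Fin T), Function.Injective f ∧
      (∀ ℓ : Fin (L + 2), ∑ k, ρ (f ℓ) (f (ℓ + 1)) k * w (f (ℓ + 1)) k ≤ 1) ∧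
      (∃ ℓ : Fin (L + 2), ∑ k, ρ (f ℓ) (f (ℓ + 1)) k * w (f (ℓ + 1)) k < 1)

/-!
A GARP violation yields a directed cycle of weak revealed-preference edges, and up to rotation
there are at most `C_T` cycles on `T` vertices (count them starting at their smallest vertex).
By the dispersion hypothesis every cycle has an edge `i → j` with mean price ratio at least
`1 + ε`. Writing `w_j = Y / ∑ Y` with `Y` i.i.d. `Exponential(1)`, the event `⟨ρ_ij, w_j⟩ ≤ 1`
becomes `∑ (ρ_ijk - 1) Y_k ≤ 0`, and Markov's inequality for `exp (-t ∑ (ρ_ijk - 1) Y_k)` with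
`t = ε / (2 (b - a)²)` bounds its probability by `∏ 1 / (1 + t (ρ_ijk - 1)) ≤ exp (-c₁ K)`.
A union bound over the cycles concludes.
-/

open scoped Nat

open Real in
lemma one_div_one_add_le_exp_sq_sub {x : ℝ} (hx : -(1 / 2) ≤ x) :
    1 / (1 + x) ≤ exp (x ^ 2 - x) := by
  rw [div_le_iff₀ (by linarith)]
  rcases le_or_gt 0 x with hx0 | hx0
  · nlinarith [add_one_le_exp (x ^ 2 - x), pow_nonneg hx0 3]
  · have hu : 0 ≤ x ^ 2 - x := by nlinarith
    have h := sum_le_exp_of_nonneg hu 3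
    simp only [sum_range_succ, sum_range_zero] at h
    norm_num [Nat.factorial] at h
    nlinarith [sq_nonneg x]

lemma lintegral_exp_neg_mul_expMeasure {r s : ℝ} (hr : 0 < r) (hs : -r < s) :
    ∫⁻ y, ENNReal.ofReal (Real.exp (-(s * y))) ∂expMeasure r = ENNReal.ofReal (r / (r + s)) := by
  have hrs : 0 < r + s := by linarith
  have hdensity : ∀ y, exponentialPDF r y * ENNReal.ofReal (Real.exp (-(s * y)))
      = ENNReal.ofReal (r / (r + s)) * exponentialPDF (r + s) y := by
    intro y
    rcases lt_or_ge y 0 with hy | hy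
    · simp [exponentialPDF_of_neg hy]
    · rw [exponentialPDF_of_nonneg hy, exponentialPDF_of_nonneg hy,
        ← ENNReal.ofReal_mul (by positivity), ← ENNReal.ofReal_mul (by positivity), mul_assoc,
        ← Real.exp_add]
      congr 1
      field_simp
      ring_nf
  have hexp : expMeasure r = volume.withDensity (exponentialPDF r) := rfl
  have hpdf (q : ℝ) : Measurable (exponentialPDF q) :=
    (measurable_exponentialPDFReal q).ennreal_ofReal
  rw [hexp, lintegral_withDensity_eq_lintegral_mul _ (hpdf r) (by fun_prop)]
  simp only [Pi.mul_apply, hdensity]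
  rw [lintegral_const_mul _ (hpdf _),
    lintegral_exponentialPDF_eq_one hrs, mul_one]

lemma expMeasure_Iic_zero {r : ℝ} (hr : 0 < r) : expMeasure r (Set.Iic 0) = 0 := by
  have := isProbabilityMeasure_expMeasure hr
  rw [← ofReal_cdf, cdf_expMeasure_eq hr]
  simp

lemma sum_sq_sub_le_of_abs_le {ι : Type*} [Fintype ι] {c : ι → ℝ} {ε D : ℝ} (hε : 0 ≤ ε)
    (hD : 0 < D) (hc : ∀ k, |c k| ≤ D) (hsum : ε * Fintype.card ι ≤ ∑ k, c k) :
    ∑ k, ((ε / (2 * D ^ 2) * c k) ^ 2 - ε / (2 * D ^ 2) * c k)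
      ≤ -(ε ^ 2 / (4 * D ^ 2)) * Fintype.card ι := by
  set t := ε / (2 * D ^ 2)
  have hsq : ∑ k, c k ^ 2 ≤ Fintype.card ι * D ^ 2 := by
    simpa using Finset.sum_le_sum fun k (_ : k ∈ univ) =>
      sq_le_sq' (abs_le.1 (hc k)).1 (abs_le.1 (hc k)).2
  calc ∑ k, ((t * c k) ^ 2 - t * c k) = t ^ 2 * ∑ k, c k ^ 2 - t * ∑ k, c k := by
        simp only [Finset.sum_sub_distrib, Finset.mul_sum, mul_pow]
    _ ≤ t ^ 2 * (Fintype.card ι * D ^ 2) - t * (ε * Fintype.card ι) := by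
        have : 0 ≤ t := div_nonneg hε (by positivity)
        gcongr
    _ = -(ε ^ 2 / (4 * D ^ 2)) * Fintype.card ι := by
        simp only [t]; field_simp; ring

lemma measure_pi_expMeasure_sum_mul_nonpos_le {ι : Type*} [Fintype ι] (c : ι → ℝ) {ε D : ℝ}
    (hε : 0 < ε) (hεD : ε ≤ D) (hc : ∀ k, |c k| ≤ D)
    (hsum : ε * Fintype.card ι ≤ ∑ k, c k) :
    Measure.pi (fun _ : ι => expMeasure 1) {Y | ∑ k, c k * Y k ≤ 0}
      ≤ ENNReal.ofReal (Real.exp (-(ε ^ 2 / (4 * D ^ 2)) * Fintype.card ι)) := by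
  have := isProbabilityMeasure_expMeasure one_pos
  have hD : 0 < D := hε.trans_le hεD
  set t := ε / (2 * D ^ 2)
  have ht : 0 < t := by positivity
  have htc (k : ι) : -(1 / 2) ≤ t * c k := by
    have : t * D ≤ 1 / 2 := by
      simp only [t]; rw [div_mul_eq_mul_div, div_le_iff₀ (by positivity)]; nlinarith
    nlinarith [neg_abs_le (c k), hc k]
  set X : ι → ℝ → ℝ≥0∞ := fun k y => ENNReal.ofReal (Real.exp (-(t * c k * y)))
  have hX (k : ι) : Measurable (X k) := by fun_prop
  have hmarkov : {Y : ι → ℝ | ∑ k, c k * Y k ≤ 0} ⊆ {Y | 1 ≤ ∏ k, X k (Y k)} := by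
    intro Y hY
    simp only [Set.mem_ofPred_eq, X] at hY ⊢
    rw [← ENNReal.ofReal_prod_of_nonneg (fun k _ => (Real.exp_pos _).le), ← Real.exp_sum,
      ENNReal.one_le_ofReal, Real.one_le_exp_iff, Finset.sum_neg_distrib, neg_nonneg]
    simp only [mul_assoc, ← Finset.mul_sum]
    exact mul_nonpos_of_nonneg_of_nonpos ht.le hY
  calc Measure.pi (fun _ : ι => expMeasure 1) {Y | ∑ k, c k * Y k ≤ 0}
      ≤ Measure.pi (fun _ : ι => expMeasure 1) {Y | 1 ≤ ∏ k, X k (Y k)} := measure_mono hmarkov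
    _ ≤ ∫⁻ Y, ∏ k, X k (Y k) ∂Measure.pi (fun _ : ι => expMeasure 1) := by
      simpa using mul_meas_ge_le_lintegral₀
        (Finset.measurable_prod _ fun k _ => (hX k).comp (measurable_pi_apply k)).aemeasurable 1
    _ = ∏ k, ∫⁻ Y, X k (Y k) ∂Measure.pi (fun _ : ι => expMeasure 1) :=
      lintegral_prod_eq_prod_lintegral_of_indepFun _ _
        (iIndepFun_pi fun k => (hX k).aemeasurable) fun k => (hX k).comp (measurable_pi_apply k)
    _ = ∏ k, ENNReal.ofReal (1 / (1 + t * c k)) := by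
      refine Finset.prod_congr rfl fun k _ => ?_
      rw [(measurePreserving_eval _ k).lintegral_comp (hX k)]
      exact lintegral_exp_neg_mul_expMeasure one_pos (by linarith [htc k])
    _ ≤ ∏ k, ENNReal.ofReal (Real.exp ((t * c k) ^ 2 - t * c k)) :=
      Finset.prod_le_prod' fun k _ => ENNReal.ofReal_le_ofReal
        (one_div_one_add_le_exp_sq_sub (htc k))
    _ = ENNReal.ofReal (Real.exp (∑ k, ((t * c k) ^ 2 - t * c k))) := by
      rw [← ENNReal.ofReal_prod_of_nonneg (fun k _ => (Real.exp_pos _).le), ← Real.exp_sum]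
    _ ≤ ENNReal.ofReal (Real.exp (-(ε ^ 2 / (4 * D ^ 2)) * Fintype.card ι)) :=
      ENNReal.ofReal_le_ofReal (Real.exp_le_exp.2 (sum_sq_sub_le_of_abs_le hε.le hD hc hsum))

lemma sum_sub_one_mul_nonpos_of_sum_mul_div_le_one {ι : Type*} [Fintype ι] [Nonempty ι]
    {r Y : ι → ℝ} (hY : ∀ k, 0 < Y k) (h : ∑ k, r k * (Y k / ∑ j, Y j) ≤ 1) :
    ∑ k, (r k - 1) * Y k ≤ 0 := by
  have hS : 0 < ∑ j, Y j := Finset.sum_pos (fun j _ => hY j) Finset.univ_nonempty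
  simp only [mul_div_assoc', ← Finset.sum_div, div_le_one hS] at h
  simpa [sub_mul, Finset.sum_sub_distrib] using h

lemma simplexUniform_sum_mul_le_one_le {K : ℕ} (hK : 0 < K) {r : Fin K → ℝ} {a b ε : ℝ}
    (hε : 0 < ε) (hr : ∀ k, a ≤ r k ∧ r k ≤ b) (hmean : (1 + ε) * K ≤ ∑ k, r k) :
    simplexUniform K {v | ∑ k, r k * v k ≤ 1}
      ≤ ENNReal.ofReal (Real.exp (-(ε ^ 2 / (4 * (b - a) ^ 2)) * K)) := by
  have := isProbabilityMeasure_expMeasure one_pos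
  have : Nonempty (Fin K) := ⟨⟨0, hK⟩⟩
  set μ := Measure.pi fun _ : Fin K => expMeasure 1
  set B : Set (Fin K → ℝ) := {Y | ∑ k, (r k - 1) * Y k ≤ 0}
  set N : Set (Fin K → ℝ) := {Y | ∃ k, Y k ≤ 0}
  have hN : μ N = 0 := by
    rw [show N = ⋃ k, Function.eval k ⁻¹' Set.Iic 0 by ext; simp [N]]
    exact measure_iUnion_null fun k =>
      Measure.pi_eval_preimage_null _ (expMeasure_Iic_zero one_pos)
  have hsub : (fun Y k => Y k / ∑ j, Y j) ⁻¹' {v | ∑ k, r k * v k ≤ 1} ⊆ B ∪ N := by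
    intro Y hY
    by_cases hpos : ∀ k, 0 < Y k
    · exact Or.inl (sum_sub_one_mul_nonpos_of_sum_mul_div_le_one hpos hY)
    · exact Or.inr (by simpa [N] using hpos)
  have hB : simplexUniform K {v | ∑ k, r k * v k ≤ 1} ≤ μ B := by
    rw [simplexUniform,
      Measure.map_apply (by fun_prop) (measurableSet_le (by fun_prop) (by fun_prop))]
    calc _ ≤ μ (B ∪ N) := measure_mono hsub
      _ ≤ μ B + μ N := measure_union_le _ _
      _ = μ B := by rw [hN, add_zero]
  have hK' : (0 : ℝ) < K := Nat.cast_pos.2 hK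
  have hb : 1 + ε ≤ b := by
    have : ∑ k, r k ≤ K * b := by simpa using Finset.sum_le_sum fun k (_ : k ∈ univ) => (hr k).2
    nlinarith
  rcases lt_or_ge a 1 with ha | ha
  · refine hB.trans ?_
    simpa using measure_pi_expMeasure_sum_mul_nonpos_le (fun k => r k - 1) hε (by linarith)
      (fun k => abs_le.2 ⟨by linarith [(hr k).1], by linarith [(hr k).2]⟩)
      (by simp [Finset.sum_sub_distrib]; linarith)
  · obtain ⟨k₀, -, hk₀⟩ : ∃ k ∈ univ, 1 < r k :=
      Finset.exists_lt_of_sum_lt (by simp; nlinarith)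
    have hBN : B ⊆ N := by
      intro Y hY
      by_contra hYN
      simp only [B, N, Set.mem_ofPred_eq, not_exists, not_le] at hY hYN
      refine (Finset.sum_pos' (fun k _ => ?_) ⟨k₀, mem_univ _, ?_⟩).not_ge hY
      · exact mul_nonneg (by linarith [(hr k).1]) (hYN k).le
      · exact mul_pos (by linarith) (hYN k₀)
    calc _ ≤ μ B := hB
      _ ≤ μ N := measure_mono hBN
      _ = 0 := hN
      _ ≤ _ := zero_le

def minFirstCycles (T L : ℕ) : Finset (Fin (L + 2) → Fin T) :=
  {f | Function.Injective f ∧ ∀ m, f 0 ≤ f m}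

section minFirstCycles

variable {T L : ℕ}

lemma mem_minFirstCycles {f : Fin (L + 2) → Fin T} :
    f ∈ minFirstCycles T L ↔ Function.Injective f ∧ ∀ m, f 0 ≤ f m := by
  simp [minFirstCycles]

lemma exists_rotate_mem_minFirstCycles {f : Fin (L + 2) → Fin T} (hf : Function.Injective f) :
    ∃ m, (fun ℓ => f (ℓ + m)) ∈ minFirstCycles T L := by
  obtain ⟨m, -, hm⟩ := Finset.exists_min_image univ f univ_nonempty
  exact ⟨m, mem_minFirstCycles.2
    ⟨fun x y hxy => add_right_cancel (hf hxy), fun ℓ => by simpa using hm _ (mem_univ _)⟩⟩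

lemma eq_zero_of_rotate_eq {f g : Fin (L + 2) → Fin T} (hf : f ∈ minFirstCycles T L)
    (hg : g ∈ minFirstCycles T L) {d : Fin (L + 2)} (h : ∀ u, f u = g (u + d)) : d = 0 := by
  obtain ⟨-, hf0⟩ := mem_minFirstCycles.1 hf
  obtain ⟨hg, hg0⟩ := mem_minFirstCycles.1 hg
  have hgd : g d ≤ g 0 := by simpa [h] using hf0 (-d)
  simpa using hg (le_antisymm hgd (hg0 d))

lemma card_minFirstCycles_mul_le : #(minFirstCycles T L) * (L + 2) ≤ T.descFactorial (L + 2) := by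
  let rotate (p : minFirstCycles T L × Fin (L + 2)) : Fin (L + 2) ↪ Fin T :=
    ⟨fun ℓ => p.1.1 (ℓ + p.2), fun _ _ h => add_right_cancel ((mem_minFirstCycles.1 p.1.2).1 h)⟩
  have hrotate : Function.Injective rotate := by
    rintro ⟨⟨f, hf⟩, m⟩ ⟨⟨g, hg⟩, m'⟩ h
    have hfg (u : Fin (L + 2)) : f u = g (u + (m' - m)) := by
      have : f (u - m + m) = g (u - m + m') := DFunLike.congr_fun h (u - m)
      rwa [sub_add_cancel, sub_add_eq_add_sub, add_sub_assoc] at this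
    obtain rfl : m = m' := (sub_eq_zero.1 (eq_zero_of_rotate_eq hf hg hfg)).symm
    obtain rfl : f = g := funext fun u => by simpa using hfg u
    rfl
  simpa [Fintype.card_embedding_eq] using Fintype.card_le_of_injective rotate hrotate

lemma card_minFirstCycles_le : #(minFirstCycles T L) ≤ T.choose (L + 2) * (L + 1)! := by
  have h := card_minFirstCycles_mul_le (T := T) (L := L)
  rw [Nat.descFactorial_eq_factorial_mul_choose, Nat.factorial_succ] at h
  exact Nat.le_of_mul_le_mul_right (h.trans_eq (by ring)) (Nat.succ_pos (L + 1))

end minFirstCycles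

lemma sum_range_sub_one_add_two {M : Type*} [AddCommMonoid M] (T : ℕ) (g : ℕ → M) :
    ∑ L ∈ range (T - 1), g (L + 2) = ∑ L ∈ Icc 2 T, g L := by
  rw [← Finset.Ico_add_one_right_eq_Icc, Finset.sum_Ico_eq_sum_range,
    show T + 1 - 2 = T - 1 by omega]
  simp only [add_comm]

lemma exists_minFirstCycles_of_not_satisfiesGARP {T K : ℕ} {ρ : Fin T → Fin T → Fin K → ℝ}
    {v : Fin T → Fin K → ℝ} (h : ¬ SatisfiesGARP ρ v) :
    ∃ L ∈ range (T - 1), ∃ f ∈ minFirstCycles T L,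
      ∀ ℓ, ∑ k, ρ (f ℓ) (f (ℓ + 1)) k * v (f (ℓ + 1)) k ≤ 1 := by
  obtain ⟨L, f, hf, hle, -⟩ := not_not.1 h
  have hLT : L + 2 ≤ T := by simpa using Fintype.card_le_of_injective f hf
  obtain ⟨m, hm⟩ := exists_rotate_mem_minFirstCycles hf
  exact ⟨L, mem_range.2 (by omega), _, hm, fun ℓ => by simpa [add_right_comm] using hle (ℓ + m)⟩

lemma measure_sum_mul_le_one_le {Ω : Type*} [MeasurableSpace Ω] {P : Measure Ω} {K : ℕ}
    (hK : 0 < K) {X : Ω → Fin K → ℝ} (hX : Measurable X) (hXP : P.map X = simplexUniform K)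
    {r : Fin K → ℝ} {a b ε : ℝ} (hε : 0 < ε) (hr : ∀ k, a ≤ r k ∧ r k ≤ b)
    (hmean : (1 + ε) * K ≤ ∑ k, r k) :
    P {ω | ∑ k, r k * X ω k ≤ 1}
      ≤ ENNReal.ofReal (Real.exp (-(ε ^ 2 / (4 * (b - a) ^ 2)) * K)) := by
  calc _ ≤ P.map X {v | ∑ k, r k * v k ≤ 1} := Measure.le_map_apply hX.aemeasurable _
    _ ≤ _ := hXP ▸ simplexUniform_sum_mul_le_one_le hK hε hr hmean

lemma measure_not_satisfiesGARP_le {Ω : Type*} [MeasurableSpace Ω] {P : Measure Ω} {T K : ℕ}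
    {ρ : Fin T → Fin T → Fin K → ℝ} {v : Ω → Fin T → Fin K → ℝ} {e : ℝ≥0∞}
    (hcycle : ∀ L, ∀ f ∈ minFirstCycles T L,
      P {ω | ∀ ℓ, ∑ k, ρ (f ℓ) (f (ℓ + 1)) k * v ω (f (ℓ + 1)) k ≤ 1} ≤ e) :
    P {ω | SatisfiesGARP ρ (v ω)}ᶜ
      ≤ (∑ L ∈ Icc 2 T, (T.choose L * (L - 1)! : ℝ≥0∞)) * e :=
  calc _ ≤ P (⋃ L ∈ range (T - 1), ⋃ f ∈ minFirstCycles T L,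
        {ω | ∀ ℓ, ∑ k, ρ (f ℓ) (f (ℓ + 1)) k * v ω (f (ℓ + 1)) k ≤ 1}) :=
        measure_mono fun ω h => by simpa using exists_minFirstCycles_of_not_satisfiesGARP h
    _ ≤ ∑ L ∈ range (T - 1), ∑ f ∈ minFirstCycles T L,
        P {ω | ∀ ℓ, ∑ k, ρ (f ℓ) (f (ℓ + 1)) k * v ω (f (ℓ + 1)) k ≤ 1} :=
        (measure_biUnion_finset_le _ _).trans (sum_le_sum fun L _ => measure_biUnion_finset_le _ _)
    _ ≤ ∑ L ∈ range (T - 1), (T.choose (L + 2) * (L + 1)! : ℝ≥0∞) * e := by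
        refine sum_le_sum fun L _ => (sum_le_card_nsmul _ _ _ (hcycle L)).trans ?_
        rw [nsmul_eq_mul]
        gcongr
        exact_mod_cast card_minFirstCycles_le
    _ = _ := by
        rw [← sum_mul, ← sum_range_sub_one_add_two]
        simp

theorem selten_area_bound_general
    {Ω : Type*} [MeasureSpace Ω] (P : Measure Ω) [IsProbabilityMeasure P]
    (T K : ℕ) (hK : 1 ≤ K)
    (a b ε : ℝ) (hε : 0 < ε)
    (ρ : Fin T → Fin T → Fin K → ℝ)
    (hbd : ∀ i j, i ≠ j → ∀ k, a ≤ ρ i j k ∧ ρ i j k ≤ b)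
    (hdisp : ∀ (L : ℕ), ∀ f : Fin (L + 2) → Fin T, Function.Injective f →
      ∃ ℓ : Fin (L + 2), 1 + ε ≤ ((1 : ℝ) / K) * ∑ k, ρ (f ℓ) (f (ℓ + 1)) k)
    (w : Fin T → Ω → (Fin K → ℝ))
    (hmeas : ∀ i, Measurable (w i))
    (hdist : ∀ i, P.map (w i) = simplexUniform K) :
    1 - (∑ L ∈ Finset.Icc 2 T, (Nat.choose T L * Nat.factorial (L - 1) : ℝ≥0∞)) *
        ENNReal.ofReal (Real.exp (-(ε ^ 2 / (4 * (b - a) ^ 2)) * K))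
      ≤ P {ω | SatisfiesGARP ρ (fun i => w i ω)} := by
  have hcycle (L : ℕ) (f : Fin (L + 2) → Fin T) (hf : f ∈ minFirstCycles T L) :
      P {ω | ∀ ℓ, ∑ k, ρ (f ℓ) (f (ℓ + 1)) k * w (f (ℓ + 1)) ω k ≤ 1}
        ≤ ENNReal.ofReal (Real.exp (-(ε ^ 2 / (4 * (b - a) ^ 2)) * K)) := by
    have hinj := (mem_minFirstCycles.1 hf).1
    obtain ⟨ℓ, hℓ⟩ := hdisp L f hinj
    have hmean : (1 + ε) * K ≤ ∑ k, ρ (f ℓ) (f (ℓ + 1)) k := by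
      rwa [one_div, inv_mul_eq_div, le_div_iff₀ (by positivity)] at hℓ
    calc _ ≤ P {ω | ∑ k, ρ (f ℓ) (f (ℓ + 1)) k * w (f (ℓ + 1)) ω k ≤ 1} :=
          measure_mono fun ω h => by exact h ℓ
      _ ≤ _ := measure_sum_mul_le_one_le hK (hmeas _) (hdist _) hε
          (hbd _ _ (hinj.ne (by simp))) hmean
  rw [tsub_le_iff_right]
  calc 1 = P Set.univ := measure_univ.symm
    _ ≤ _ := measure_univ_le_add_compl {ω | SatisfiesGARP ρ (fun i => w i ω)}
    _ ≤ _ := add_le_add_right (measure_not_satisfiesGARP_le (v := fun ω i => w i ω) hcycle) _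

/-- Vanishing empirical content of GARP: under bounded price ratios and
non-vanishing Carli dispersion on every cycle, the Selten Area
`A_K = P(GARP holds)` satisfies `A_K ≥ 1 - C_T exp (-c₁ K)`
with `c₁ = ε² / (4 (b-a)²)`. -/
theorem selten_area_bound
    {Ω : Type*} [MeasureSpace Ω] (P : Measure Ω) [IsProbabilityMeasure P]
    (T K : ℕ) (hT : 2 ≤ T) (hK : 1 ≤ K)
    (a b ε : ℝ) (ha : 0 < a) (hab : a ≤ b) (hε : 0 < ε)
    (ρ : Fin T → Fin T → Fin K → ℝ)
    (hbd : ∀ i j, i ≠ j → ∀ k, a ≤ ρ i j k ∧ ρ i j k ≤ b)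
    (hdisp : ∀ (L : ℕ), ∀ f : Fin (L + 2) → Fin T, Function.Injective f →
      ∃ ℓ : Fin (L + 2), 1 + ε ≤ ((1 : ℝ) / K) * ∑ k, ρ (f ℓ) (f (ℓ + 1)) k)
    (w : Fin T → Ω → (Fin K → ℝ))
    (hmeas : ∀ i, Measurable (w i))
    (hindep : iIndepFun w P)
    (hdist : ∀ i, P.map (w i) = simplexUniform K) :
    1 - (∑ L ∈ Finset.Icc 2 T, (Nat.choose T L * Nat.factorial (L - 1) : ℝ≥0∞)) *
        ENNReal.ofReal (Real.exp (-(ε ^ 2 / (4 * (b - a) ^ 2)) * K))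
      ≤ P {ω | SatisfiesGARP ρ (fun i => w i ω)} :=
  selten_area_bound_general P T K hK a b ε hε ρ hbd hdisp w hmeas hdist
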